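/- arXiv:1311.0625 — 4 statements merged into one kernel-verified Lean document; each statement's English description precedes it below -/
import Mathlib

section
/- Let q, h, a : ℝ → E³ together with a differentiable conical curvature κ : ℝ → ℝ be a Frenet frame of a ruled surface, and assume κ(s) ≠ 0 for all s. If there exist a fixed vector u ∈ E³ with u ≠ 0 and a real constant c ≠ 0 such that ⟪h(s), u⟫ = c for all s (i.e., the surface is h-slant with axis u), then the function s ↦ κ'(s) / (1 + κ(s)²)^{3/2} is constant on ℝ. -/
open RealInnerProductSpace Matrix

noncomputable section

abbrev E3 := EuclideanSpace ℝ (Fin 3)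

/-- A Frenet frame of a ruled surface: `q`, `h`, `a` are orthonormal at every
parameter and satisfy the Frenet equations with conical curvature `κ`. -/
def IsFrenetFrame (q h a : ℝ → E3) (κ : ℝ → ℝ) : Prop :=
  (∀ s, ⟪q s, q s⟫ = 1 ∧ ⟪h s, h s⟫ = 1 ∧ ⟪a s, a s⟫ = 1 ∧
        ⟪q s, h s⟫ = 0 ∧ ⟪q s, a s⟫ = 0 ∧ ⟪h s, a s⟫ = 0) ∧
  (∀ s, HasDerivAt q (h s) s) ∧
  (∀ s, HasDerivAt h (-q s + κ s • a s) s) ∧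
  (∀ s, HasDerivAt a (-(κ s • h s)) s)

/-- The Darboux vector of the frame. -/
def darboux (q a : ℝ → E3) (κ : ℝ → ℝ) : ℝ → E3 := fun s => κ s • q s + a s

/-!
Write `f = ⟪q, u⟫` and `g = ⟪a, u⟫`. The Frenet equations give `f' = c`, `g' = -κ c`, and
differentiating `⟪h, u⟫ = c` gives `f = κ g`. Differentiating `f = κ g` once more yields
`κ' g = c (1 + κ²)`, and with this the derivative of `g √(1 + κ²)` vanishes. Hence
`κ' / (1 + κ²)^{3/2} = c / (g √(1 + κ²))` is constant.
-/

namespace IsFrenetFrame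

variable {q h a : ℝ → E3} {κ : ℝ → ℝ}

theorem hasDerivAt_inner_q (hF : IsFrenetFrame q h a κ) (u : E3) (s : ℝ) :
    HasDerivAt (fun t => ⟪q t, u⟫) ⟪h s, u⟫ s := by
  simpa using (hF.2.1 s).inner ℝ (hasDerivAt_const s u)

theorem hasDerivAt_inner_h (hF : IsFrenetFrame q h a κ) (u : E3) (s : ℝ) :
    HasDerivAt (fun t => ⟪h t, u⟫) (-⟪q s, u⟫ + κ s * ⟪a s, u⟫) s := by
  simpa [inner_add_left, inner_smul_left] using (hF.2.2.1 s).inner ℝ (hasDerivAt_const s u)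

theorem hasDerivAt_inner_a (hF : IsFrenetFrame q h a κ) (u : E3) (s : ℝ) :
    HasDerivAt (fun t => ⟪a t, u⟫) (-(κ s * ⟪h s, u⟫)) s := by
  simpa [inner_smul_left] using (hF.2.2.2 s).inner ℝ (hasDerivAt_const s u)

variable {u : E3} {c : ℝ}

theorem inner_q_eq_mul_inner_a (hF : IsFrenetFrame q h a κ) (hslant : ∀ s, ⟪h s, u⟫ = c)
    (s : ℝ) : ⟪q s, u⟫ = κ s * ⟪a s, u⟫ := by
  have hconst : HasDerivAt (fun t => ⟪h t, u⟫) 0 s := by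
    simpa only [hslant] using hasDerivAt_const s c
  linarith [(hF.hasDerivAt_inner_h u s).unique hconst]

theorem deriv_mul_inner_a (hF : IsFrenetFrame q h a κ) (hslant : ∀ s, ⟪h s, u⟫ = c)
    {s : ℝ} (hκ : DifferentiableAt ℝ κ s) :
    deriv κ s * ⟪a s, u⟫ = c * (1 + κ s ^ 2) := by
  have hprod := hκ.hasDerivAt.mul (hF.hasDerivAt_inner_a u s)
  have hq : HasDerivAt (fun t => κ t * ⟪a t, u⟫) c s := by
    simpa only [hF.inner_q_eq_mul_inner_a hslant, hslant] using hF.hasDerivAt_inner_q u s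
  rw [hslant] at hprod
  linear_combination hprod.unique hq

theorem inner_a_mul_sqrt_eq (hF : IsFrenetFrame q h a κ) (hslant : ∀ s, ⟪h s, u⟫ = c)
    (hκ : Differentiable ℝ κ) (s t : ℝ) :
    ⟪a s, u⟫ * √(1 + κ s ^ 2) = ⟪a t, u⟫ * √(1 + κ t ^ 2) := by
  have hderiv (s : ℝ) : HasDerivAt (fun t => ⟪a t, u⟫ * √(1 + κ t ^ 2)) 0 s := by
    have hw : 0 < 1 + κ s ^ 2 := by positivity
    have hsqrt := (((hκ s).hasDerivAt.fun_pow 2).const_add 1).sqrt hw.ne'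
    refine ((hF.hasDerivAt_inner_a u s).mul hsqrt).congr_deriv ?_
    field_simp
    rw [hslant]
    linear_combination
      2 * κ s * hF.deriv_mul_inner_a hslant (hκ s) - 2 * κ s * c * Real.sq_sqrt hw.le
  exact is_const_of_deriv_eq_zero (fun s => (hderiv s).differentiableAt)
    (fun s => (hderiv s).deriv) s t

end IsFrenetFrame

theorem Real.rpow_three_halves {x : ℝ} (hx : 0 ≤ x) : x ^ ((3 : ℝ) / 2) = x * √x := by
  rw [show (3 : ℝ) / 2 = 1 + 1 / 2 by norm_num, Real.rpow_add' hx (by norm_num),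
    Real.rpow_one, Real.sqrt_eq_rpow]

theorem h_slant_implies_const_general
    (q h a : ℝ → E3) (κ : ℝ → ℝ)
    (hframe : IsFrenetFrame q h a κ)
    (hκdiff : Differentiable ℝ κ)
    (u : E3) (c : ℝ) (hc : c ≠ 0)
    (hslant : ∀ s, ⟪h s, u⟫ = c) :
    ∃ d : ℝ, ∀ s, deriv κ s / (1 + κ s ^ 2) ^ ((3 : ℝ) / 2) = d := by
  refine ⟨c / (⟪a 0, u⟫ * √(1 + κ 0 ^ 2)), fun s => ?_⟩
  have hw : 0 < 1 + κ s ^ 2 := by positivity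
  have hκg := hframe.deriv_mul_inner_a hslant (hκdiff s)
  have hg : ⟪a s, u⟫ ≠ 0 := by
    rintro hg
    rw [hg, mul_zero] at hκg
    exact mul_ne_zero hc hw.ne' hκg.symm
  rw [← hframe.inner_a_mul_sqrt_eq hslant hκdiff s 0, Real.rpow_three_halves hw.le]
  field_simp
  linear_combination hκg

theorem h_slant_implies_const
    (q h a : ℝ → E3) (κ : ℝ → ℝ)
    (hframe : IsFrenetFrame q h a κ)
    (hκdiff : Differentiable ℝ κ)
    (hκne : ∀ s, κ s ≠ 0)
    (u : E3) (hu : u ≠ 0) (c : ℝ) (hc : c ≠ 0)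
    (hslant : ∀ s, ⟪h s, u⟫ = c) :
    ∃ d : ℝ, ∀ s, deriv κ s / (1 + κ s ^ 2) ^ ((3 : ℝ) / 2) = d :=
  h_slant_implies_const_general q h a κ hframe hκdiff u c hc hslant
end
end

section
/- Let q, h, a : ℝ → E³ together with a differentiable conical curvature κ : ℝ → ℝ be a Frenet frame of a ruled surface, and suppose there is d ∈ ℝ with κ'(s) / (1 + κ(s)²)^{3/2} = d for all s. Define u(s) = (κ(s)/√(1 + κ(s)²))·q(s) + d·h(s) + (1/√(1 + κ(s)²))·a(s). Then u is a constant map (its derivative vanishes at every s), and ⟪h(s), u(s)⟫ = d for all s; in particular, if d ≠ 0 the surface is h-slant with axis u. -/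
open RealInnerProductSpace Matrix

noncomputable section

/-!
With `w = √(1 + κ²)`, the hypothesis says `κ' = d w³`, so `(κ / w)' = κ' / w³ = d` and
`(1 / w)' = -κ κ' / w³ = -d κ`. Differentiating `u = (κ / w) q + d h + (1 / w) a` with the
Frenet equations, the `q`-, `h`- and `a`-coefficients of `u'` are `d - d`, `κ / w - κ / w`
and `d κ - d κ`. Orthonormality gives `⟪h, u⟫ = d`, and this also shows `u ≠ 0` when `d ≠ 0`.
-/

namespace Real

theorem rpow_three_halves_eq_sqrt_pow_three {x : ℝ} (hx : 0 ≤ x) :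
    x ^ ((3 : ℝ) / 2) = √x ^ 3 := by
  rw [rpow_div_two_eq_sqrt _ hx]
  exact_mod_cast rpow_natCast (√x) 3

end Real

namespace HasDerivAt

variable {f : ℝ → ℝ} {f' x : ℝ}

theorem sqrt_one_add_sq (hf : HasDerivAt f f' x) :
    HasDerivAt (fun t => √(1 + f t ^ 2)) (f x * f' / √(1 + f x ^ 2)) x := by
  have hsq : HasDerivAt (fun t => 1 + f t ^ 2) (2 * f x * f') x :=
    ((hf.pow 2).const_add 1).congr_deriv (by norm_num)
  exact (hsq.sqrt (by positivity)).congr_deriv (by field_simp)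

theorem div_sqrt_one_add_sq (hf : HasDerivAt f f' x) :
    HasDerivAt (fun t => f t / √(1 + f t ^ 2)) (f' / √(1 + f x ^ 2) ^ 3) x := by
  refine (hf.div hf.sqrt_one_add_sq (by positivity)).congr_deriv ?_
  field_simp
  rw [Real.sq_sqrt (by positivity)]
  ring

theorem one_div_sqrt_one_add_sq (hf : HasDerivAt f f' x) :
    HasDerivAt (fun t => 1 / √(1 + f t ^ 2)) (-(f x * f') / √(1 + f x ^ 2) ^ 3) x := by
  simp only [one_div]
  exact (hf.sqrt_one_add_sq.inv (by positivity)).congr_deriv (by field_simp)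

end HasDerivAt

namespace IsFrenetFrame

variable {q h a : ℝ → E3} {κ : ℝ → ℝ}

theorem inner_h_combination (hF : IsFrenetFrame q h a κ) (s α β γ : ℝ) :
    ⟪h s, α • q s + β • h s + γ • a s⟫ = β := by
  obtain ⟨-, hh, -, hqh, -, hha⟩ := hF.1 s
  simp only [inner_add_right, real_inner_smul_right, real_inner_comm (q s), hqh, hh, hha]
  ring

theorem hasDerivAt_combination (hF : IsFrenetFrame q h a κ) {α β γ : ℝ → ℝ} {α' β' γ' s : ℝ}
    (hα : HasDerivAt α α' s) (hβ : HasDerivAt β β' s) (hγ : HasDerivAt γ γ' s) :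
    HasDerivAt (fun t => α t • q t + β t • h t + γ t • a t)
      ((α' - β s) • q s + (α s + β' - κ s * γ s) • h s + (β s * κ s + γ') • a s) s := by
  obtain ⟨-, hq, hh, ha⟩ := hF
  refine (((hα.smul (hq s)).add (hβ.smul (hh s))).add (hγ.smul (ha s))).congr_deriv ?_
  module

end IsFrenetFrame

theorem const_implies_h_slant
    (q h a : ℝ → E3) (κ : ℝ → ℝ)
    (hframe : IsFrenetFrame q h a κ)
    (hκdiff : Differentiable ℝ κ)
    (d : ℝ) (hd : ∀ s, deriv κ s / (1 + κ s ^ 2) ^ ((3 : ℝ) / 2) = d)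
    (u : ℝ → E3)
    (hu : ∀ s, u s = (κ s / Real.sqrt (1 + κ s ^ 2)) • q s + d • h s
        + (1 / Real.sqrt (1 + κ s ^ 2)) • a s) :
    (∀ s, HasDerivAt u 0 s) ∧ (∀ s, ⟪h s, u s⟫ = d) ∧
    (d ≠ 0 → ∃ v : E3, v ≠ 0 ∧ (∀ s, u s = v) ∧ ∀ s, ⟪h s, v⟫ = d) := by
  have hκ' (s : ℝ) : HasDerivAt κ (d * √(1 + κ s ^ 2) ^ 3) s := by
    rw [← hd s, Real.rpow_three_halves_eq_sqrt_pow_three (by positivity),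
      div_mul_cancel₀ _ (by positivity)]
    exact (hκdiff s).hasDerivAt
  have hu_deriv (s : ℝ) : HasDerivAt u 0 s := by
    rw [funext hu]
    refine (hframe.hasDerivAt_combination (hκ' s).div_sqrt_one_add_sq (hasDerivAt_const s d)
      (hκ' s).one_div_sqrt_one_add_sq).congr_deriv ?_
    match_scalars <;> field_simp <;> ring
  have hu_inner (s : ℝ) : ⟪h s, u s⟫ = d := by
    rw [hu]
    exact hframe.inner_h_combination s _ _ _
  have hu_const (s : ℝ) : u s = u 0 :=
    is_const_of_deriv_eq_zero (fun t => (hu_deriv t).differentiableAt)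
      (fun t => (hu_deriv t).deriv) s 0
  refine ⟨hu_deriv, hu_inner, fun hd0 => ⟨u 0, ?_, hu_const, fun s => hu_const s ▸ hu_inner s⟩⟩
  intro hzero
  exact hd0 (by simpa [hzero, eq_comm] using hu_inner 0)
end
end

section
/- Let q, h, a : ℝ → E³ together with a twice continuously differentiable conical curvature κ : ℝ → ℝ be a Frenet frame of a ruled surface, with κ(s) ≠ 0 for all s, and let W(s) = κ(s)·q(s) + a(s) be the Darboux vector. If there is a fixed nonzero vector u ∈ E³ such that s ↦ ⟪W(s), u⟫ is constant, then for every s the determinant of the 3×3 matrix whose columns are the coordinates of W(s), W'(s) and W''(s) equals 0 (where W' and W'' denote the first and second derivatives of W). -/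
open RealInnerProductSpace Matrix

noncomputable section

/-! Since `W' = κ' q`, the slant condition `⟪W, u⟫ = C` differentiates to `κ' ⟪q, u⟫ = 0`.
On the open set where `κ' ≠ 0` the function `⟪q, u⟫` therefore vanishes, and differentiating
with the Frenet equations makes `⟪h, u⟫`, then `κ ⟪a, u⟫`, then `κ' ⟪a, u⟫` vanish there
too, forcing `u = 0`. Hence `κ' ≡ 0`, so `W' ≡ 0` and the determinant has a zero column. -/

theorem HasDerivAt.eq_zero_of_forall_mem_eq_zero {𝕜 F : Type*} [NontriviallyNormedField 𝕜]
    [NormedAddCommGroup F] [NormedSpace 𝕜 F] {f : 𝕜 → F} {f' : F} {x : 𝕜} {U : Set 𝕜}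
    (hf : HasDerivAt f f' x) (hU : IsOpen U) (hx : x ∈ U) (h0 : ∀ y ∈ U, f y = 0) :
    f' = 0 :=
  hf.unique <| (hasDerivAt_const x 0).congr_of_eventuallyEq <|
    Filter.eventually_of_mem (hU.mem_nhds hx) h0

theorem HasDerivAt.inner_right_const {E : Type*} [NormedAddCommGroup E] [InnerProductSpace ℝ E]
    {f : ℝ → E} {f' : E} {x : ℝ} (hf : HasDerivAt f f' x) (u : E) :
    HasDerivAt (fun t => ⟪f t, u⟫) ⟪f', u⟫ x := by
  simpa using hf.inner ℝ (hasDerivAt_const x u)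

theorem Orthonormal.eq_zero_of_forall_inner_eq_zero {𝕜 E ι : Type*} [RCLike 𝕜]
    [NormedAddCommGroup E] [InnerProductSpace 𝕜 E] [Fintype ι] [Nonempty ι] {v : ι → E}
    (hv : Orthonormal 𝕜 v) (hcard : Fintype.card ι = Module.finrank 𝕜 E) {u : E}
    (hu : ∀ i, inner 𝕜 (v i) u = 0) : u = 0 :=
  InnerProductSpace.ext_inner_left_basis (basisOfOrthonormalOfCardEqFinrank hv hcard) <| by
    simpa using hu

namespace IsFrenetFrame

variable {q h a : ℝ → E3} {κ : ℝ → ℝ}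

theorem orthonormal (hF : IsFrenetFrame q h a κ) (s : ℝ) : Orthonormal ℝ ![q s, h s, a s] := by
  obtain ⟨hqq, hhh, haa, hqh, hqa, hha⟩ := hF.1 s
  have hnorm : ∀ v : E3, ⟪v, v⟫ = 1 → ‖v‖ = 1 := fun v hv => by
    rw [norm_eq_sqrt_real_inner, hv, Real.sqrt_one]
  rw [orthonormal_iff_ite]
  intro i j
  fin_cases i <;> fin_cases j <;>
    simp [hnorm _ hqq, hnorm _ hhh, hnorm _ haa, hqh, hqa, hha, real_inner_comm]

theorem eq_zero_of_inner_eq_zero (hF : IsFrenetFrame q h a κ) {s : ℝ} {u : E3}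
    (hq : ⟪q s, u⟫ = 0) (hh : ⟪h s, u⟫ = 0) (ha : ⟪a s, u⟫ = 0) : u = 0 :=
  (hF.orthonormal s).eq_zero_of_forall_inner_eq_zero (by simp) fun i => by
    fin_cases i <;> assumption

theorem hasDerivAt_darboux (hF : IsFrenetFrame q h a κ) {κ' s : ℝ} (hκ : HasDerivAt κ κ' s) :
    HasDerivAt (darboux q a κ) (κ' • q s) s :=
  ((hκ.smul (hF.2.1 s)).add (hF.2.2.2 s)).congr_deriv (by abel)

theorem deriv_mul_inner_eq_zero (hF : IsFrenetFrame q h a κ) (hκ : Differentiable ℝ κ)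
    {u : E3} {C : ℝ} (hW : ∀ s, ⟪darboux q a κ s, u⟫ = C) (s : ℝ) :
    deriv κ s * ⟪q s, u⟫ = 0 := by
  have hderiv := (hF.hasDerivAt_darboux (hκ s).hasDerivAt).inner_right_const u
  rw [real_inner_smul_left, show (fun t => ⟪darboux q a κ t, u⟫) = fun _ => C from funext hW]
    at hderiv
  exact hderiv.unique (hasDerivAt_const s C)

theorem eq_zero_of_inner_eq_zero_on (hF : IsFrenetFrame q h a κ) (hκ : Differentiable ℝ κ)
    {U : Set ℝ} (hU : IsOpen U) (hκU : ∀ s ∈ U, deriv κ s ≠ 0) {u : E3}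
    (hqU : ∀ s ∈ U, ⟪q s, u⟫ = 0) {s : ℝ} (hs : s ∈ U) : u = 0 := by
  have hhU : ∀ t ∈ U, ⟪h t, u⟫ = 0 := fun t ht =>
    ((hF.2.1 t).inner_right_const u).eq_zero_of_forall_mem_eq_zero hU ht hqU
  have hκaU : ∀ t ∈ U, κ t * ⟪a t, u⟫ = 0 := fun t ht => by
    have := ((hF.2.2.1 t).inner_right_const u).eq_zero_of_forall_mem_eq_zero hU ht hhU
    rwa [inner_add_left, inner_neg_left, hqU t ht, real_inner_smul_left, neg_zero, zero_add]
      at this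
  have haU : ∀ t ∈ U, ⟪a t, u⟫ = 0 := fun t ht => by
    have hprod := (hκ t).hasDerivAt.mul ((hF.2.2.2 t).inner_right_const u)
    have := hprod.eq_zero_of_forall_mem_eq_zero hU ht hκaU
    rw [inner_neg_left, real_inner_smul_left, hhU t ht, mul_zero, neg_zero, mul_zero,
      add_zero] at this
    exact (mul_eq_zero.mp this).resolve_left (hκU t ht)
  exact hF.eq_zero_of_inner_eq_zero (hqU s hs) (hhU s hs) (haU s hs)

theorem deriv_eq_zero_of_inner_darboux_eq_const (hF : IsFrenetFrame q h a κ)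
    (hκ : ContDiff ℝ 2 κ) {u : E3} (hu : u ≠ 0) {C : ℝ}
    (hW : ∀ s, ⟪darboux q a κ s, u⟫ = C) (s : ℝ) : deriv κ s = 0 := by
  by_contra hs
  have hκd : Differentiable ℝ κ := hκ.differentiable (by norm_num)
  have hU : IsOpen {t | deriv κ t ≠ 0} :=
    isOpen_ne.preimage (hκ.continuous_deriv (by norm_num))
  refine hu (hF.eq_zero_of_inner_eq_zero_on hκd hU (fun _ ht => ht) (fun t ht => ?_) hs)
  exact (mul_eq_zero.mp (hF.deriv_mul_inner_eq_zero hκd hW t)).resolve_left ht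

end IsFrenetFrame

theorem darboux_slant_det_zero_general
    (q h a : ℝ → E3) (κ : ℝ → ℝ)
    (hframe : IsFrenetFrame q h a κ)
    (hκC2 : ContDiff ℝ 2 κ)
    (u : E3) (hu : u ≠ 0) (C : ℝ)
    (hW : ∀ s, ⟪darboux q a κ s, u⟫ = C) :
    ∀ s, Matrix.det (Matrix.of fun i j =>
      ![darboux q a κ s, deriv (darboux q a κ) s,
        deriv (deriv (darboux q a κ)) s] j i) = 0 := by
  intro s
  have hκ' : deriv κ s = 0 := hframe.deriv_eq_zero_of_inner_darboux_eq_const hκC2 hu hW s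
  have hW' : deriv (darboux q a κ) s = 0 := by
    rw [(hframe.hasDerivAt_darboux ((hκC2.differentiable (by norm_num)) s).hasDerivAt).deriv,
      hκ', zero_smul]
  exact det_eq_zero_of_column_eq_zero 1 fun i => by simp [hW']

theorem darboux_slant_det_zero
    (q h a : ℝ → E3) (κ : ℝ → ℝ)
    (hframe : IsFrenetFrame q h a κ)
    (hκC2 : ContDiff ℝ 2 κ)
    (hκne : ∀ s, κ s ≠ 0)
    (u : E3) (hu : u ≠ 0) (C : ℝ)
    (hW : ∀ s, ⟪darboux q a κ s, u⟫ = C) :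
    ∀ s, Matrix.det (Matrix.of fun i j =>
      ![darboux q a κ s, deriv (darboux q a κ) s,
        deriv (deriv (darboux q a κ)) s] j i) = 0 :=
  darboux_slant_det_zero_general q h a κ hframe hκC2 u hu C hW
end
end

section
/- Let q, h, a : ℝ → E³ together with a conical curvature κ : ℝ → ℝ be a Frenet frame of a ruled surface, where κ is a constant function with value κ₀ ≠ 0, and let W(s) = κ₀·q(s) + a(s) be the Darboux vector. Let u ∈ E³ be a fixed nonzero vector and C ∈ ℝ with ⟪W(s), u⟫ = C for all s (the surface is Darboux slant). Then the function s ↦ ⟪h(s), u⟫ is constant (the surface is h-slant with axis u) if and only if ⟪a(s), u⟫ = C / (1 + κ₀²) for all s (the surface is a-slant with axis u and constant angle λ given by cos λ = C/(1+κ₀²)). -/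
open RealInnerProductSpace Matrix

noncomputable section

/-! Differentiating `⟪h, u⟫` with `h' = -q + κ₀ a` shows that `h` is slant exactly when
`⟪q, u⟫ = κ₀ ⟪a, u⟫`, and the Darboux condition `κ₀ ⟪q, u⟫ + ⟪a, u⟫ = C` then reads
`(1 + κ₀²) ⟪a, u⟫ = C`. Conversely, `a' = -κ₀ h` shows that an `a`-slant frame has
`⟪h, u⟫ = 0`. -/

theorem inner_eq_zero_of_hasDerivAt_of_inner_const {F : Type*} [NormedAddCommGroup F]
    [InnerProductSpace ℝ F] {f f' : ℝ → F} (hf : ∀ s, HasDerivAt f (f' s) s) {u : F} {c : ℝ}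
    (hc : ∀ s, ⟪f s, u⟫ = c) (s : ℝ) : ⟪f' s, u⟫ = 0 := by
  have hderiv : HasDerivAt (fun t => ⟪f t, u⟫) ⟪f' s, u⟫ s := by
    simpa using (hf s).inner ℝ (hasDerivAt_const s u)
  have hconst : (fun t => ⟪f t, u⟫) = fun _ => c := funext hc
  rw [hconst] at hderiv
  exact hderiv.unique (hasDerivAt_const s c)

namespace IsFrenetFrame

variable {q h a : ℝ → E3} {κ : ℝ → ℝ} {u : E3} {c : ℝ}

theorem inner_q_eq_of_inner_h_const (hF : IsFrenetFrame q h a κ) (hc : ∀ s, ⟪h s, u⟫ = c)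
    (s : ℝ) : ⟪q s, u⟫ = κ s * ⟪a s, u⟫ := by
  have hderiv := inner_eq_zero_of_hasDerivAt_of_inner_const hF.2.2.1 hc s
  rw [inner_add_left, inner_neg_left, real_inner_smul_left] at hderiv
  linarith

theorem inner_h_eq_zero_of_inner_a_const (hF : IsFrenetFrame q h a κ) (hc : ∀ s, ⟪a s, u⟫ = c)
    {s : ℝ} (hκ : κ s ≠ 0) : ⟪h s, u⟫ = 0 := by
  have hderiv := inner_eq_zero_of_hasDerivAt_of_inner_const hF.2.2.2 hc s
  rw [inner_neg_left, real_inner_smul_left, neg_eq_zero] at hderiv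
  exact (mul_eq_zero.mp hderiv).resolve_left hκ

end IsFrenetFrame

theorem h_slant_iff_a_slant_general
    (q h a : ℝ → E3) (κ : ℝ → ℝ)
    (hframe : IsFrenetFrame q h a κ)
    (κ₀ : ℝ) (hκ₀ : κ₀ ≠ 0) (hκconst : ∀ s, κ s = κ₀)
    (u : E3) (C : ℝ)
    (hW : ∀ s, ⟪κ₀ • q s + a s, u⟫ = C) :
    (∃ c : ℝ, ∀ s, ⟪h s, u⟫ = c) ↔ (∀ s, ⟪a s, u⟫ = C / (1 + κ₀ ^ 2)) := by
  constructor
  · rintro ⟨c, hc⟩ s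
    have hq := hframe.inner_q_eq_of_inner_h_const hc s
    have hWs := hW s
    rw [inner_add_left, real_inner_smul_left, hq, hκconst] at hWs
    rw [eq_div_iff (by positivity)]
    linear_combination hWs
  · intro ha
    exact ⟨0, fun s => hframe.inner_h_eq_zero_of_inner_a_const ha (by rwa [hκconst])⟩

theorem h_slant_iff_a_slant
    (q h a : ℝ → E3) (κ : ℝ → ℝ)
    (hframe : IsFrenetFrame q h a κ)
    (κ₀ : ℝ) (hκ₀ : κ₀ ≠ 0) (hκconst : ∀ s, κ s = κ₀)
    (u : E3) (hu : u ≠ 0) (C : ℝ)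
    (hW : ∀ s, ⟪κ₀ • q s + a s, u⟫ = C) :
    (∃ c : ℝ, ∀ s, ⟪h s, u⟫ = c) ↔ (∀ s, ⟪a s, u⟫ = C / (1 + κ₀ ^ 2)) :=
  h_slant_iff_a_slant_general q h a κ hframe κ₀ hκ₀ hκconst u C hW
end
end
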